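/- arXiv:1902.10532 — 4 statements merged into one kernel-verified Lean document; each statement's English description precedes it below -/
import Mathlib

section
/- For every real number x ≥ 2, the prime counting function satisfies the two-sided Chebyshev-type bound: (ln 2)·x/ln x − 2 ≤ π(x) ≤ 4·(ln 2)·x/ln x + log₂ x. -/
/-!
The primes in `(m, 2m]` all divide `C(2m, m) ≤ 4 ^ m` and exceed `m`, so there are at most
`2 log 2 · m / log m` of them. Writing `m = ⌈n / 2⌉`, this gives
`π n ≤ π m + 2 log 2 · m / log m`, which propagates `π n ≤ 4 log 2 · n / log n` by strong
induction from the range `n < 32`, where it is checked directly; `t / log t` is increasing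
for `t ≥ e`, which passes from `⌊x⌋` to `x`.
The lower bound is Mathlib's `Chebyshev.pi_ge'`, which rests on `2 ^ n ≤ (n + 1) lcm(1, …, n)`.
-/

open Finset Real
open Nat (primesLE primesLE_mono centralBinom)
open scoped Nat.Prime

lemma prod_primesLE_sdiff_le_centralBinom (m : ℕ) :
    ∏ p ∈ primesLE (2 * m) \ primesLE m, p ≤ centralBinom m := by
  have hsplit : (∏ p ∈ primesLE (2 * m) \ primesLE m, p) * primorial m = primorial (2 * m) :=
    prod_sdiff (primesLE_mono (by omega))
  have hle : primorial (2 * m) ≤ primorial m * centralBinom m := by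
    rw [two_mul, Nat.centralBinom_eq_two_mul_choose, two_mul]
    exact primorial_add_le le_rfl
  rw [← hsplit, mul_comm] at hle
  exact Nat.le_of_mul_le_mul_left hle (primorial_pos m)

lemma pow_card_primesLE_sdiff_le_four_pow (m : ℕ) :
    (m + 1) ^ #(primesLE (2 * m) \ primesLE m) ≤ 4 ^ m := by
  calc (m + 1) ^ #(primesLE (2 * m) \ primesLE m)
      ≤ ∏ p ∈ primesLE (2 * m) \ primesLE m, p := by
        refine pow_card_le_prod _ _ _ fun p hp ↦ ?_
        simp only [mem_sdiff, Nat.mem_primesLE] at hp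
        grind
    _ ≤ centralBinom m := prod_primesLE_sdiff_le_centralBinom m
    _ ≤ 4 ^ m := Nat.centralBinom_le_four_pow m

lemma primeCounting_two_mul_le_add_div_log {m : ℕ} (hm : 2 ≤ m) :
    (π (2 * m) : ℝ) ≤ π m + 2 * log 2 * m / log m := by
  set k := #(primesLE (2 * m) \ primesLE m)
  have hcard : π (2 * m) = k + π m := by
    simp only [k, ← Nat.primesLE_card_eq_primeCounting]
    exact (card_sdiff_add_card_eq_card (primesLE_mono (by omega))).symm
  have hlogm : 0 < log m := log_pos (by exact_mod_cast hm)
  have hpow : ((m : ℝ) + 1) ^ k ≤ 2 ^ (2 * m) := by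
    rw [pow_mul]; exact_mod_cast pow_card_primesLE_sdiff_le_four_pow m
  have hk : k * log (m + 1) ≤ 2 * m * log 2 := by
    simpa only [log_pow, Nat.cast_mul, Nat.cast_ofNat] using log_le_log (by positivity) hpow
  have hmono : log m ≤ log (m + 1) := log_le_log (by positivity) (by linarith)
  rw [hcard, Nat.cast_add, add_comm, add_le_add_iff_left, le_div_iff₀ hlogm]
  nlinarith [mul_le_mul_of_nonneg_left hmono (Nat.cast_nonneg (α := ℝ) k)]

lemma six_log_two_mul_div_log_le {m n : ℝ} (hm : 16 ≤ m) (hmn : 2 * m - 1 ≤ n)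
    (hnm : n ≤ 2 * m) :
    6 * log 2 * m / log m ≤ 4 * log 2 * n / log n := by
  have hlog2 : 0 < log 2 := log_pos one_lt_two
  have hlogm : 4 * log 2 ≤ log m := by
    rw [← log_rpow two_pos]; exact log_le_log (by norm_num) (by norm_num; linarith)
  have hlogn : log n ≤ log 2 + log m := by
    rw [← log_mul two_ne_zero (by linarith)]; exact log_le_log (by linarith) hnm
  rw [div_le_div_iff₀ (by linarith) (log_pos (by linarith))]
  have hcoef : 0 ≤ 6 * log 2 * m := mul_nonneg (by positivity) (by linarith)
  nlinarith [mul_le_mul_of_nonneg_left hlogn hcoef,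
    mul_le_mul_of_nonneg_left hmn (by nlinarith : (0 : ℝ) ≤ 4 * log 2 * log m),
    mul_le_mul_of_nonneg_left hlogm (by nlinarith : (0 : ℝ) ≤ (2 * m - 4) * log 2),
    mul_nonneg (mul_nonneg hlog2.le hlog2.le) (by linarith : (0 : ℝ) ≤ m - 8)]

lemma primeCounting_le_four_log_two_mul_div_log {n : ℕ} (hn : 2 ≤ n) :
    (π n : ℝ) ≤ 4 * log 2 * n / log n := by
  induction n using Nat.strong_induction_on with
  | _ n ih =>
  have hlogn : 0 < log n := log_pos (by exact_mod_cast hn)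
  rcases lt_or_ge n 32 with hsmall | hlarge
  · have hpi : 5 * π n ≤ 4 * n := by interval_cases n <;> decide
    have hlog32 : log n ≤ 5 * log 2 := by
      rw [← log_rpow two_pos]
      exact log_le_log (by positivity) (by norm_num; exact_mod_cast hsmall.le)
    rw [le_div_iff₀ hlogn]
    have : (5 * π n : ℝ) ≤ 4 * n := by exact_mod_cast hpi
    nlinarith [log_pos one_lt_two]
  · set m := (n + 1) / 2
    have hmn : m < n := by omega
    calc (π n : ℝ) ≤ π (2 * m) := by exact_mod_cast Nat.monotone_primeCounting (by omega)
      _ ≤ π m + 2 * log 2 * m / log m := primeCounting_two_mul_le_add_div_log (by omega)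
      _ ≤ 4 * log 2 * m / log m + 2 * log 2 * m / log m := by
        gcongr; exact ih m hmn (by omega)
      _ = 6 * log 2 * m / log m := by ring
      _ ≤ 4 * log 2 * n / log n := by
        apply six_log_two_mul_div_log_le
        · exact_mod_cast (by omega : 16 ≤ m)
        · have : 2 * m ≤ n + 1 := by omega
          have : ((2 * m : ℕ) : ℝ) ≤ n + 1 := by exact_mod_cast this
          push_cast at this; linarith
        · exact_mod_cast (by omega : n ≤ 2 * m)

lemma div_log_le_div_log {a b : ℝ} (ha : exp 1 ≤ a) (hab : a ≤ b) :
    a / log a ≤ b / log b := by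
  have hlog : log a / a ≥ log b / b :=
    log_div_self_antitoneOn ha (ha.trans hab : exp 1 ≤ b) hab
  have hb : 0 < log b / b :=
    div_pos (log_pos (by linarith [add_one_le_exp 1])) (by linarith [exp_pos 1])
  simpa only [inv_div] using inv_anti₀ hb hlog

lemma primeCounting_floor_le_four_log_two_mul_div_log_add_logb {x : ℝ} (hx : 2 ≤ x) :
    (π ⌊x⌋₊ : ℝ) ≤ 4 * log 2 * x / log x + logb 2 x := by
  have hfloor : 2 ≤ ⌊x⌋₊ := Nat.le_floor (by exact_mod_cast hx)
  have hlogb : 1 ≤ logb 2 x := by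
    rw [le_logb_iff_rpow_le one_lt_two (by linarith)]; simpa using hx
  rcases hfloor.eq_or_lt with htwo | hthree
  · have : 0 ≤ 4 * log 2 * x / log x :=
      div_nonneg (by nlinarith [log_pos one_lt_two]) (log_nonneg (by linarith))
    rw [← htwo, show π 2 = 1 by decide]
    push_cast; linarith
  · have hmono : 4 * log 2 * ⌊x⌋₊ / log ⌊x⌋₊ ≤ 4 * log 2 * x / log x := by
      have : (3 : ℝ) ≤ ⌊x⌋₊ := by exact_mod_cast hthree
      simp only [mul_div_assoc]
      exact mul_le_mul_of_nonneg_left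
        (div_log_le_div_log (by linarith [exp_one_lt_d9]) (Nat.floor_le (by linarith)))
        (by positivity)
    have : 0 ≤ logb 2 x := by linarith
    linarith [primeCounting_le_four_log_two_mul_div_log hfloor]

lemma log_two_mul_div_log_sub_two_le_primeCounting_floor {x : ℝ} (hx : 2 ≤ x) :
    log 2 * x / log x - 2 ≤ π ⌊x⌋₊ := by
  have hlogx : 0 < log x := log_pos (by linarith)
  rcases lt_or_ge x 4 with hsmall | hlarge
  · have hfloor : ⌊x⌋₊ ≤ π ⌊x⌋₊ + 1 := by
      have h2 : 2 ≤ ⌊x⌋₊ := Nat.le_floor (by exact_mod_cast hx)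
      have h4 : ⌊x⌋₊ < 4 := Nat.floor_lt (by linarith) |>.2 (by exact_mod_cast hsmall)
      interval_cases ⌊x⌋₊ <;> decide
    have hx1 : x < ⌊x⌋₊ + 1 := Nat.lt_floor_add_one x
    have : log 2 * x / log x ≤ x := by
      rw [div_le_iff₀ hlogx, mul_comm]
      exact mul_le_mul_of_nonneg_left (log_le_log two_pos hx) (by linarith)
    have : (⌊x⌋₊ : ℝ) ≤ π ⌊x⌋₊ + 1 := by exact_mod_cast hfloor
    linarith
  · -- since `2 (x + 2) ≤ x ^ 2` once `x ≥ 1 + √5`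
    have hlog : log 2 + log (x + 2) ≤ 2 * log x := by
      rw [← log_mul two_ne_zero (by linarith), show 2 * log x = log (x ^ 2) by simp [log_pow]]
      exact log_le_log (by linarith) (by nlinarith)
    refine le_trans ?_ (Chebyshev.pi_ge' (by linarith))
    rw [sub_le_iff_le_add, ← sub_le_iff_le_add', ← sub_div, div_le_iff₀ hlogx]
    linarith

/-- For every real `x ≥ 2`, the prime counting function satisfies the Chebyshev-type
two-sided bound `(ln 2)·x/ln x − 2 ≤ π(x) ≤ 4·(ln 2)·x/ln x + log₂ x`, where `π(x)`
is the number of primes `p ≤ x`. -/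
theorem chebyshev_type_bound (x : ℝ) (hx : 2 ≤ x) :
    Real.log 2 * x / Real.log x - 2 ≤ (Nat.primeCounting ⌊x⌋₊ : ℝ) ∧
      (Nat.primeCounting ⌊x⌋₊ : ℝ) ≤ 4 * Real.log 2 * x / Real.log x + Real.logb 2 x :=
  ⟨log_two_mul_div_log_sub_two_le_primeCounting_floor hx,
    primeCounting_floor_le_four_log_two_mul_div_log_add_logb hx⟩
end

section
/- For every integer i ≥ 3, the following inequality holds: (ln 2 / 2)·(6e^{i!} + 1)/ln(6e^{i!} + 1) − 1 − 2·(ln 2)·(6e^{(i−1)!} − 1)/ln(6e^{(i−1)!} − 1) − (1/2)·log₂(6e^{(i−1)!} − 1) > e^{i!}/i! − e^{(i−1)!}/(i−1)!. -/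
set_option maxHeartbeats 1000000

open Real Nat

private lemma key_ineq (a m n E F L1 L2 : ℝ)
    (ha1 : 0.693 ≤ a) (ha2 : a ≤ 0.694)
    (hm : 2 ≤ m) (hn3 : 3*m ≤ n)
    (hF1 : 7*m^2/4 ≤ F) (hF2 : 54 ≤ F^2)
    (hEF : F^3 * n ≤ E * (3*m))
    (hE0 : 0 < E) (hF0 : 0 < F)
    (hL1a : n < L1) (hL1b : L1 ≤ n + 2)
    (hL2a : m ≤ L2) (hL2b : L2 ≤ m + 2) :
    a/2*(6*E+1)/L1 - 1 - 2*a*(6*F-1)/L2 - 1/2*(L2/a) > E/n - F/m := by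
  have hm0 : (0:ℝ) < m := by linarith
  have hn6 : (6:ℝ) ≤ n := by linarith
  have hn0 : (0:ℝ) < n := by linarith
  have hL10 : (0:ℝ) < L1 := by linarith
  have hL20 : (0:ℝ) < L2 := by linarith
  have ha0 : (0:ℝ) < a := by linarith
  have hA : 3*a*E/(n+2) ≤ a/2*(6*E+1)/L1 := by
    rw [div_le_div_iff₀ (by linarith) hL10]
    nlinarith [mul_le_mul_of_nonneg_left hL1b (by positivity : (0:ℝ) ≤ 3*a*E),
      mul_pos ha0 (by linarith : (0:ℝ) < n+2)]
  have hB : 2*a*(6*F-1)/L2 ≤ 12*a*F/m := by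
    rw [div_le_div_iff₀ hL20 hm0]
    nlinarith [mul_le_mul_of_nonneg_left hL2a (by positivity : (0:ℝ) ≤ 12*a*F),
      mul_pos ha0 hm0]
  have hC : 1/2*(L2/a) ≤ m + 2 := by
    have h1 : L2/a ≤ 2*(m+2) := by
      rw [div_le_iff₀ ha0]
      nlinarith [mul_le_mul_of_nonneg_left ha1 (by linarith : (0:ℝ) ≤ m+2)]
    linarith
  have hD : E/n + 0.558*(E/n) ≤ 3*a*E/(n+2) := by
    have h' : 1.558*(n+2) ≤ 3*a*n := by
      nlinarith [mul_nonneg (by linarith : (0:ℝ) ≤ n) (by linarith : (0:ℝ) ≤ a - 0.693)]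
    have h2 : 1.558*E/n ≤ 3*a*E/(n+2) := by
      rw [div_le_div_iff₀ hn0 (by linarith)]
      nlinarith [mul_le_mul_of_nonneg_left h' hE0.le]
    have h3 : E/n + 0.558*(E/n) = 1.558*E/n := by ring
    linarith
  have hE : 3 + m + 12*a*F/m < 0.558*(E/n) := by
    have h54 : 54*F ≤ F^3 := by
      have := mul_le_mul_of_nonneg_right hF2 hF0.le
      nlinarith
    have haF : 12*a*F ≤ 8.328*F := by
      nlinarith [mul_nonneg hF0.le (by linarith : (0:ℝ) ≤ 0.694 - a)]
    have hmm : m^2 + 3*m < 3.003*m^2 := by nlinarith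
    have hFm2 : 3.003*m^2 ≤ 1.716*F := by linarith
    have h2 : (3 + m)*m + 12*a*F < 0.186 * F^3 := by nlinarith
    have e1 : 3 + m + 12*a*F/m = ((3+m)*m + 12*a*F)/m := by field_simp
    have h3 : 3 + m + 12*a*F/m < 0.186*F^3/m := by
      rw [e1, div_lt_div_iff₀ hm0 hm0]
      nlinarith
    have h4 : 0.186*F^3/m ≤ 0.558*E/n := by
      rw [div_le_div_iff₀ hm0 hn0]
      nlinarith
    have e2 : 0.558*(E/n) = 0.558*E/n := by ring
    linarith
  have hFm : 0 < F/m := div_pos hF0 hm0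
  linarith

/-- Lemma 1 of the paper: for every integer `i ≥ 3`,
`(ln 2/2)·(6e^{i!}+1)/ln(6e^{i!}+1) − 1 − 2·(ln 2)·(6e^{(i−1)!}−1)/ln(6e^{(i−1)!}−1)
  − (1/2)·log₂(6e^{(i−1)!}−1) > e^{i!}/i! − e^{(i−1)!}/(i−1)!`. -/
theorem lemma_one (i : ℕ) (hi : 3 ≤ i) :
    Real.log 2 / 2 * (6 * Real.exp (i.factorial : ℝ) + 1)
        / Real.log (6 * Real.exp (i.factorial : ℝ) + 1)
      - 1
      - 2 * Real.log 2 * (6 * Real.exp ((i - 1).factorial : ℝ) - 1)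
        / Real.log (6 * Real.exp ((i - 1).factorial : ℝ) - 1)
      - 1 / 2 * Real.logb 2 (6 * Real.exp ((i - 1).factorial : ℝ) - 1)
    > Real.exp (i.factorial : ℝ) / (i.factorial : ℝ)
        - Real.exp ((i - 1).factorial : ℝ) / ((i - 1).factorial : ℝ) := by
  set m : ℝ := ((i - 1).factorial : ℝ) with hmdef
  set n : ℝ := (i.factorial : ℝ) with hndef
  have hm : (2:ℝ) ≤ m := by
    have h1 : 2 ≤ i - 1 := by omega
    have h2 : i - 1 ≤ (i-1).factorial := Nat.self_le_factorial _
    rw [hmdef]; exact_mod_cast le_trans h1 h2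
  have hn3 : 3*m ≤ n := by
    have hfac : i.factorial = i * (i-1).factorial := by
      conv_lhs => rw [show i = (i-1)+1 by omega]
      rw [Nat.factorial_succ]
      congr 1; omega
    have : 3 * (i-1).factorial ≤ i * (i-1).factorial :=
      Nat.mul_le_mul_right _ hi
    rw [hmdef, hndef, hfac]; exact_mod_cast this
  have hm0 : (0:ℝ) < m := by linarith
  have hn0 : (0:ℝ) < n := by linarith
  have he1 : (2.718:ℝ) ≤ Real.exp 1 := by
    have := Real.exp_one_gt_d9; linarith
  have he2 : (7.38:ℝ) ≤ Real.exp 2 := by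
    have h : Real.exp 2 = Real.exp 1 ^ 2 := by
      rw [show (2:ℝ) = 1 + 1 by norm_num, Real.exp_add]; ring
    nlinarith
  have hF0 : 0 < Real.exp m := Real.exp_pos m
  have hE0 : 0 < Real.exp n := Real.exp_pos n
  have hFe2 : Real.exp 2 ≤ Real.exp m := Real.exp_le_exp.mpr hm
  have hF7 : (7:ℝ) ≤ Real.exp m := by linarith
  have hE1 : (1:ℝ) ≤ Real.exp n := Real.one_le_exp (by linarith)
  have hF2 : (54:ℝ) ≤ (Real.exp m)^2 := by nlinarith
  have hF1 : 7*m^2/4 ≤ Real.exp m := by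
    have hsplit : Real.exp m = Real.exp 2 * Real.exp (m - 2) := by
      rw [← Real.exp_add]; ring_nf
    have hhalf : Real.exp (m-2) = Real.exp ((m-2)/2) ^ 2 := by
      rw [show m-2 = (m-2)/2 + (m-2)/2 by ring, Real.exp_add]; ring
    have hlb : 1 + (m-2)/2 ≤ Real.exp ((m-2)/2) := by
      have := Real.add_one_le_exp ((m-2)/2); linarith
    have hnn : (0:ℝ) ≤ 1 + (m-2)/2 := by linarith
    have hsq : (1 + (m-2)/2)^2 ≤ Real.exp ((m-2)/2) ^ 2 := by
      apply pow_le_pow_left₀ hnn hlb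
    nlinarith [Real.exp_pos ((m-2)/2)]
  have hEF : (Real.exp m)^3 * n ≤ Real.exp n * (3*m) := by
    have hcube : (Real.exp m)^3 = Real.exp (3*m) := by
      rw [show 3*m = m + (m + m) by ring, Real.exp_add, Real.exp_add]; ring
    have hsplit : Real.exp n = Real.exp (3*m) * Real.exp (n - 3*m) := by
      rw [← Real.exp_add]; ring_nf
    have h1 : n - 3*m + 1 ≤ Real.exp (n - 3*m) := by
      have := Real.add_one_le_exp (n - 3*m); linarith
    rw [hcube, hsplit]
    nlinarith [Real.exp_pos (3*m),
      mul_le_mul_of_nonneg_left h1 (by positivity : (0:ℝ) ≤ Real.exp (3*m) * (3*m)),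
      mul_nonneg (mul_nonneg (Real.exp_pos (3*m)).le (by linarith : (0:ℝ) ≤ 3*m - 1))
        (by linarith : (0:ℝ) ≤ n - 3*m)]
  have hL1a : n < Real.log (6 * Real.exp n + 1) := by
    have h := Real.log_lt_log hE0 (by linarith : Real.exp n < 6 * Real.exp n + 1)
    rwa [Real.log_exp] at h
  have hL1b : Real.log (6 * Real.exp n + 1) ≤ n + 2 := by
    have hle : 6 * Real.exp n + 1 ≤ Real.exp (n + 2) := by
      rw [Real.exp_add]; nlinarith
    have h := Real.log_le_log (by positivity) hle
    rwa [Real.log_exp] at h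
  have hL2a : m ≤ Real.log (6 * Real.exp m - 1) := by
    have h := Real.log_le_log hF0 (by linarith : Real.exp m ≤ 6 * Real.exp m - 1)
    rwa [Real.log_exp] at h
  have hL2b : Real.log (6 * Real.exp m - 1) ≤ m + 2 := by
    have hle : 6 * Real.exp m - 1 ≤ Real.exp (m + 2) := by
      rw [Real.exp_add]; nlinarith
    have h := Real.log_le_log (by linarith) hle
    rwa [Real.log_exp] at h
  have ha1 : (0.693:ℝ) ≤ Real.log 2 := by
    have := Real.log_two_gt_d9; linarith
  have ha2 : Real.log 2 ≤ (0.694:ℝ) := by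
    have := Real.log_two_lt_d9; linarith
  rw [Real.logb]
  exact key_ineq (Real.log 2) m n (Real.exp n) (Real.exp m) _ _
    ha1 ha2 hm hn3 hF1 hF2 hEF hE0 hF0 hL1a hL1b hL2a hL2b
end

section
/- For every integer i ≥ 6, the following inequality holds: 2·e^{i!}/ln(6·e^{i!}) > 3 + 7·(ln 2)·e^{(i−1)!}/(i−1)!. -/
set_option maxHeartbeats 1000000


/-- The strengthened inequality (6): for every integer `i ≥ 6`,
`2·e^{i!}/ln(6·e^{i!}) > 3 + 7·(ln 2)·e^{(i−1)!}/(i−1)!`. -/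
theorem key_inequality (i : ℕ) (hi : 6 ≤ i) :
    2 * Real.exp (i.factorial : ℝ) / Real.log (6 * Real.exp (i.factorial : ℝ)) >
      3 + 7 * Real.log 2 * Real.exp ((i - 1).factorial : ℝ) / ((i - 1).factorial : ℝ) := by
  have hfac : i.factorial = i * (i - 1).factorial := by
    cases i with
    | zero => omega
    | succ j => simp [Nat.factorial_succ]
  set N : ℝ := ((i - 1).factorial : ℝ) with hNdef
  have hN : (120 : ℝ) ≤ N := by
    have h : (120 : ℕ) ≤ (i - 1).factorial := by
      calc 120 = Nat.factorial 5 := rfl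
        _ ≤ _ := Nat.factorial_le (by omega)
    rw [hNdef]; exact_mod_cast h
  have hi6 : (6 : ℝ) ≤ (i : ℝ) := by exact_mod_cast hi
  have hM : (i.factorial : ℝ) = (i : ℝ) * N := by
    rw [hfac]; push_cast; ring
  set M : ℝ := (i.factorial : ℝ) with hMdef
  have hMbig : (720 : ℝ) ≤ M := by nlinarith
  have hexpN : (1 : ℝ) ≤ Real.exp N := by
    have := Real.add_one_le_exp N; linarith
  have hlog : Real.log (6 * Real.exp M) = Real.log 6 + M := by
    rw [Real.log_mul (by norm_num) (Real.exp_ne_zero M), Real.log_exp]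
  have hlog6 : Real.log 6 ≤ 5 := by
    have := Real.log_le_sub_one_of_pos (by norm_num : (0:ℝ) < 6); linarith
  have hlog6nn : 0 ≤ Real.log 6 := Real.log_nonneg (by norm_num)
  have hlogpos : 0 < Real.log 6 + M := by linarith
  have hL : Real.exp M / M ≤ 2 * Real.exp M / (Real.log 6 + M) := by
    rw [div_le_div_iff₀ (by linarith) hlogpos]
    nlinarith [(Real.exp_pos M).le]
  have ha : (0 : ℝ) ≤ ((i : ℝ) - 1) * N := by nlinarith
  have hq : (10 : ℝ) * ((i : ℝ) * N) ≤ Real.exp (((i : ℝ) - 1) * N) := by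
    have h1 := Real.add_one_le_exp ((((i : ℝ) - 1) * N) / 2)
    have h3 : (Real.exp ((((i : ℝ) - 1) * N) / 2)) ^ 2 = Real.exp (((i : ℝ) - 1) * N) := by
      rw [sq, ← Real.exp_add]; ring_nf
    have h2 : ((((i : ℝ) - 1) * N) / 2 + 1) ^ 2 ≤ Real.exp (((i : ℝ) - 1) * N) := by
      rw [← h3]
      have hnn : 0 ≤ (((i : ℝ) - 1) * N) / 2 + 1 := by linarith
      nlinarith [h1, hnn]
    have hi2 : 6 * (i : ℝ) ≤ (i : ℝ) ^ 2 := by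
      nlinarith [mul_le_mul_of_nonneg_left hi6 (by linarith : (0:ℝ) ≤ (i : ℝ))]
    have h4' : 40 * (i : ℝ) ≤ ((i : ℝ) - 1) ^ 2 * N := by
      have := mul_le_mul_of_nonneg_left hN (sq_nonneg ((i : ℝ) - 1))
      nlinarith
    have h4 : 40 * (i : ℝ) * N ≤ (((i : ℝ) - 1) * N) ^ 2 := by
      have := mul_le_mul_of_nonneg_right h4' (by linarith : (0:ℝ) ≤ N)
      nlinarith
    have h5 : ((((i : ℝ) - 1) * N) / 2 + 1) ^ 2
        = (((i : ℝ) - 1) * N) ^ 2 / 4 + ((i : ℝ) - 1) * N + 1 := by ring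
    rw [h5] at h2
    linarith [h2, h4, ha]
  have hMN : Real.exp M = Real.exp N * Real.exp (((i : ℝ) - 1) * N) := by
    rw [← Real.exp_add, hM]; ring_nf
  have hmain : 10 * Real.exp N ≤ Real.exp M / M := by
    rw [le_div_iff₀ (by linarith : (0 : ℝ) < M), hMN, hM]
    nlinarith [mul_le_mul_of_nonneg_left hq (Real.exp_pos N).le, hexpN, ha]
  have hlog2 : Real.log 2 ≤ 1 := by
    have := Real.log_le_sub_one_of_pos (by norm_num : (0:ℝ) < 2); linarith
  have hlog2pos : 0 < Real.log 2 := Real.log_pos (by norm_num)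
  have hRHS : 3 + 7 * Real.log 2 * Real.exp N / N < 10 * Real.exp N := by
    have h7 : 7 * Real.log 2 * Real.exp N / N ≤ 7 * Real.exp N / 120 := by
      rw [div_le_div_iff₀ (by linarith) (by norm_num)]
      nlinarith [Real.exp_pos N]
    nlinarith [Real.exp_pos N]
  rw [hlog]
  calc 3 + 7 * Real.log 2 * Real.exp N / N < 10 * Real.exp N := hRHS
    _ ≤ Real.exp M / M := hmain
    _ ≤ 2 * Real.exp M / (Real.log 6 + M) := hL
end

section
/- With M_i = (e^{i!}/i! − e^{(i−1)!}/(i−1)!)² / (e^{i!} − e^{(i−1)!}) for each integer i ≥ 3, the series Σ_{i=3}^{∞} M_i diverges; that is, the partial sums Σ_{i=3}^{n} M_i tend to +∞ as n → ∞. -/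
/-- The paper's estimate of the expected number of twin positions in the interval
`(e^{(i−1)!}, e^{i!}]`. -/
noncomputable def twinExpectation (i : ℕ) : ℝ :=
  (Real.exp (i.factorial : ℝ) / (i.factorial : ℝ)
      - Real.exp ((i - 1).factorial : ℝ) / ((i - 1).factorial : ℝ)) ^ 2
    / (Real.exp (i.factorial : ℝ) - Real.exp ((i - 1).factorial : ℝ))

lemma twinExpectation_nonneg (i : ℕ) : 0 ≤ twinExpectation i := by
  unfold twinExpectation
  apply div_nonneg (sq_nonneg _)
  have : ((i-1).factorial : ℝ) ≤ (i.factorial : ℝ) := by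
    exact_mod_cast Nat.factorial_le (Nat.sub_le i 1)
  simpa using Real.exp_le_exp.mpr this

lemma twinExpectation_lb (i : ℕ) (hi : 3 ≤ i) :
    Real.exp (i.factorial : ℝ) / (4 * (i.factorial : ℝ)^2) ≤ twinExpectation i := by
  set a : ℝ := (i.factorial : ℝ) with ha
  set b : ℝ := ((i-1).factorial : ℝ) with hb
  have hb2 : (2:ℝ) ≤ b := by
    have : Nat.factorial 2 ≤ Nat.factorial (i-1) := Nat.factorial_le (by omega)
    simp [hb]; exact_mod_cast this
  have hbpos : (0:ℝ) < b := by linarith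
  have hfact : i.factorial = i * (i-1).factorial := by
    conv_lhs => rw [show i = (i-1)+1 by omega]
    rw [Nat.factorial_succ]; congr 1; omega
  have hab : a = i * b := by rw [ha, hb, hfact]; push_cast; ring
  have hi3 : (3:ℝ) ≤ (i:ℝ) := by exact_mod_cast hi
  have hapos : (0:ℝ) < a := by rw [hab]; positivity
  have hba : b < a := by
    rw [hab]; nlinarith
  set A := Real.exp a with hA
  set B := Real.exp b with hB
  have hApos : 0 < A := Real.exp_pos a
  have hBA : B < A := Real.exp_lt_exp.mpr hba
  -- key: 2 * i * B ≤ A  (i.e. exp (a-b) ≥ 2 i)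
  have hkey : 2 * (i:ℝ) * B ≤ A := by
    have hhalf : (i:ℝ) - 1 ≤ (a - b) / 2 := by
      rw [hab]; nlinarith
    have h1 : (i:ℝ) ≤ 1 + (a-b)/2 := by linarith
    have h2 : 1 + (a-b)/2 ≤ Real.exp ((a-b)/2) := by
      have := Real.add_one_le_exp ((a-b)/2); linarith
    have h3 : (i:ℝ)^2 ≤ Real.exp ((a-b)/2) ^ 2 := by
      apply pow_le_pow_left₀ (by linarith) (le_trans h1 h2)
    have h4 : Real.exp ((a-b)/2) ^ 2 = Real.exp (a - b) := by
      rw [← Real.exp_nat_mul]; ring_nf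
    have h5 : 2 * (i:ℝ) ≤ (i:ℝ)^2 := by nlinarith
    have h6 : 2 * (i:ℝ) ≤ Real.exp (a - b) := by
      calc 2*(i:ℝ) ≤ (i:ℝ)^2 := h5
        _ ≤ Real.exp ((a-b)/2)^2 := h3
        _ = Real.exp (a-b) := h4
    have h7 : Real.exp (a-b) * B = A := by
      rw [hA, hB, ← Real.exp_add]; ring_nf
    have hBpos : 0 < B := Real.exp_pos b
    nlinarith
  -- B/b ≤ A/(2a)
  have hdiv : B / b ≤ A / (2 * a) := by
    rw [div_le_div_iff₀ hbpos (by linarith)]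
    calc B * (2*a) = 2 * (i:ℝ) * B * b := by rw [hab]; ring
      _ ≤ A * b := by nlinarith
  have h1 : A / (2*a) ≤ A / a - B / b := by
    have : A / a - A / (2*a) = A / (2*a) := by field_simp; ring
    linarith
  have hnum0 : 0 ≤ A / (2*a) := by positivity
  have h2 : (A/(2*a))^2 ≤ (A/a - B/b)^2 := pow_le_pow_left₀ hnum0 h1 2
  have hdenpos : 0 < A - B := by linarith
  have hBpos : 0 < B := Real.exp_pos b
  have e1 : A/(4*a^2) = (A/(2*a))^2 / A := by
    field_simp; ring
  have final : A/(4*a^2) ≤ (A/a - B/b)^2/(A-B) := by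
    rw [e1]
    gcongr
    · linarith
  unfold twinExpectation
  rw [← ha, ← hb, ← hA, ← hB]
  exact final
/-- The series `Σ_{i=3}^{∞} M_i` diverges: the partial sums `Σ_{i=3}^{n} M_i`
tend to `+∞` as `n → ∞`. -/
theorem twin_series_diverges :
    Filter.Tendsto (fun n : ℕ => ∑ i ∈ Finset.Icc 3 n, twinExpectation i)
      Filter.atTop Filter.atTop := by
  have hfac : Filter.Tendsto (fun i : ℕ => (i.factorial : ℝ)) Filter.atTop Filter.atTop :=
    tendsto_natCast_atTop_atTop.comp
      (Filter.tendsto_atTop_mono (fun n => Nat.self_le_factorial n) Filter.tendsto_id)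
  have hexp : Filter.Tendsto (fun x : ℝ => Real.exp x / x ^ 2) Filter.atTop Filter.atTop :=
    Real.tendsto_exp_div_pow_atTop 2
  have htend : Filter.Tendsto
      (fun i : ℕ => Real.exp (i.factorial : ℝ) / (4 * (i.factorial : ℝ) ^ 2))
      Filter.atTop Filter.atTop := by
    have h := (hexp.comp hfac).atTop_div_const (by norm_num : (0:ℝ) < 4)
    refine h.congr fun i => ?_
    simp only [Function.comp]
    rw [div_div, mul_comm]
  refine Filter.tendsto_atTop_mono' _ ?_ htend
  filter_upwards [Filter.eventually_ge_atTop 3] with n hn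
  calc Real.exp (n.factorial : ℝ) / (4 * (n.factorial : ℝ) ^ 2)
      ≤ twinExpectation n := twinExpectation_lb n hn
    _ ≤ ∑ i ∈ Finset.Icc 3 n, twinExpectation i :=
        Finset.single_le_sum (fun i _ => twinExpectation_nonneg i)
          (Finset.mem_Icc.mpr ⟨hn, le_refl n⟩)
end
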